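/- arXiv:2307.15340 — 3 statements merged into one kernel-verified Lean document; each statement's English description precedes it below -/
import Mathlib

section
/- Let p₁, p₂ be coprime positive integers and d a natural number, and let f be a mixed polynomial that is radially weighted homogeneous with weight vector (p₁,p₂) and radial degree d. Then: (i) if p₁ is even, then f(u,−v) = (−1)^d · f(u,v) for all u,v ∈ ℂ; (ii) if p₂ is even, then f(−u,v) = (−1)^d · f(u,v) for all u,v ∈ ℂ; (iii) if p₁ and p₂ are both odd, then f(−u,−v) = (−1)^d · f(u,v) for all u,v ∈ ℂ. Consequently the zero set V_f is u-even in case (i), v-even in case (ii), and odd in case (iii). -/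
/-!
Radial weighted homogeneity says `f (t ^ p₁ * u) (t ^ p₂ * v) = t ^ d * f u v` for every real `t`;
real scalars commute with complex conjugation, so each mixed monomial just picks up the factor
`t ^ d`. Taking `t = -1` turns `(t ^ p₁, t ^ p₂)` into `(1, -1)`, `(-1, 1)` or `(-1, -1)`
according to the parities of `p₁` and `p₂`, which cannot both be even since they are coprime.
-/

open ComplexConjugate

theorem eq_zero_iff_of_eq_neg_one_pow_mul {R : Type*} [Ring R] {a b : R} {d : ℕ}
    (h : a = (-1) ^ d * b) : b = 0 ↔ a = 0 := by
  rw [h, ((isUnit_neg_one (α := R)).pow d).mul_right_eq_zero]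

section RadialHomogeneity

variable {p₁ p₂ d : ℕ} {S : Finset (ℕ × ℕ × ℕ × ℕ)} {c : ℕ × ℕ × ℕ × ℕ → ℂ} {f : ℂ → ℂ → ℂ}

theorem mixedPolynomial_ofReal_pow_mul
    (hf : ∀ u v : ℂ, f u v =
      ∑ q ∈ S, c q * u ^ q.1 * (conj u) ^ q.2.1 * v ^ q.2.2.1 * (conj v) ^ q.2.2.2)
    (hhom : ∀ q ∈ S, p₁ * (q.1 + q.2.1) + p₂ * (q.2.2.1 + q.2.2.2) = d)
    (t : ℝ) (u v : ℂ) :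
    f ((t : ℂ) ^ p₁ * u) ((t : ℂ) ^ p₂ * v) = (t : ℂ) ^ d * f u v := by
  rw [hf, hf u v, Finset.mul_sum]
  refine Finset.sum_congr rfl fun q hq => ?_
  simp only [map_mul, map_pow, Complex.conj_ofReal]
  rw [← hhom q hq]
  ring

theorem mixedPolynomial_neg_one_pow_mul
    (hf : ∀ u v : ℂ, f u v =
      ∑ q ∈ S, c q * u ^ q.1 * (conj u) ^ q.2.1 * v ^ q.2.2.1 * (conj v) ^ q.2.2.2)
    (hhom : ∀ q ∈ S, p₁ * (q.1 + q.2.1) + p₂ * (q.2.2.1 + q.2.2.2) = d) (u v : ℂ) :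
    f ((-1) ^ p₁ * u) ((-1) ^ p₂ * v) = (-1) ^ d * f u v := by
  simpa using mixedPolynomial_ofReal_pow_mul hf hhom (-1) u v

end RadialHomogeneity

theorem stmt_0_general (p₁ p₂ : ℕ)
    (hcop : Nat.Coprime p₁ p₂) (d : ℕ)
    (S : Finset (ℕ × ℕ × ℕ × ℕ)) (c : ℕ × ℕ × ℕ × ℕ → ℂ)
    (f : ℂ → ℂ → ℂ)
    (hf : ∀ u v : ℂ, f u v =
      ∑ q ∈ S, c q * u ^ q.1 * (starRingEnd ℂ u) ^ q.2.1 *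
        v ^ q.2.2.1 * (starRingEnd ℂ v) ^ q.2.2.2)
    (hhom : ∀ q ∈ S, p₁ * (q.1 + q.2.1) + p₂ * (q.2.2.1 + q.2.2.2) = d) :
    (Even p₁ →
      (∀ u v : ℂ, f u (-v) = (-1 : ℂ) ^ d * f u v) ∧
      (∀ u v : ℂ, f u v = 0 ↔ f u (-v) = 0)) ∧
    (Even p₂ →
      (∀ u v : ℂ, f (-u) v = (-1 : ℂ) ^ d * f u v) ∧
      (∀ u v : ℂ, f u v = 0 ↔ f (-u) v = 0)) ∧
    (Odd p₁ → Odd p₂ →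
      (∀ u v : ℂ, f (-u) (-v) = (-1 : ℂ) ^ d * f u v) ∧
      (∀ u v : ℂ, f u v = 0 ↔ f (-u) (-v) = 0)) := by
  have key := mixedPolynomial_neg_one_pow_mul hf hhom
  refine ⟨fun h₁ => ?_, fun h₂ => ?_, fun h₁ h₂ => ?_⟩
  · have h₂ : Odd p₂ := (Nat.Coprime.coprime_dvd_left h₁.two_dvd hcop).odd_of_left
    have H : ∀ u v : ℂ, f u (-v) = (-1) ^ d * f u v := by
      simpa [h₁.neg_one_pow, h₂.neg_one_pow] using key
    exact ⟨H, fun u v => eq_zero_iff_of_eq_neg_one_pow_mul (H u v)⟩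
  · have h₁ : Odd p₁ := (Nat.Coprime.coprime_dvd_right h₂.two_dvd hcop).odd_of_right
    have H : ∀ u v : ℂ, f (-u) v = (-1) ^ d * f u v := by
      simpa [h₁.neg_one_pow, h₂.neg_one_pow] using key
    exact ⟨H, fun u v => eq_zero_iff_of_eq_neg_one_pow_mul (H u v)⟩
  · have H : ∀ u v : ℂ, f (-u) (-v) = (-1) ^ d * f u v := by
      simpa [h₁.neg_one_pow, h₂.neg_one_pow] using key
    exact ⟨H, fun u v => eq_zero_iff_of_eq_neg_one_pow_mul (H u v)⟩

/-- A mixed polynomial that is radially weighted homogeneous with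
coprime positive weight vector `(p₁, p₂)` and radial degree `d` satisfies the
symmetry `f(u,-v) = (-1)^d f(u,v)` when `p₁` is even, `f(-u,v) = (-1)^d f(u,v)`
when `p₂` is even, and `f(-u,-v) = (-1)^d f(u,v)` when both are odd; hence the
zero set is u-even, v-even or odd, respectively. -/
theorem stmt_0 (p₁ p₂ : ℕ) (hp₁ : 0 < p₁) (hp₂ : 0 < p₂)
    (hcop : Nat.Coprime p₁ p₂) (d : ℕ)
    (S : Finset (ℕ × ℕ × ℕ × ℕ)) (c : ℕ × ℕ × ℕ × ℕ → ℂ)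
    (f : ℂ → ℂ → ℂ)
    (hf : ∀ u v : ℂ, f u v =
      ∑ q ∈ S, c q * u ^ q.1 * (starRingEnd ℂ u) ^ q.2.1 *
        v ^ q.2.2.1 * (starRingEnd ℂ v) ^ q.2.2.2)
    (hhom : ∀ q ∈ S, p₁ * (q.1 + q.2.1) + p₂ * (q.2.2.1 + q.2.2.2) = d) :
    (Even p₁ →
      (∀ u v : ℂ, f u (-v) = (-1 : ℂ) ^ d * f u v) ∧
      (∀ u v : ℂ, f u v = 0 ↔ f u (-v) = 0)) ∧
    (Even p₂ →
      (∀ u v : ℂ, f (-u) v = (-1 : ℂ) ^ d * f u v) ∧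
      (∀ u v : ℂ, f u v = 0 ↔ f (-u) v = 0)) ∧
    (Odd p₁ → Odd p₂ →
      (∀ u v : ℂ, f (-u) (-v) = (-1 : ℂ) ^ d * f u v) ∧
      (∀ u v : ℂ, f u v = 0 ↔ f (-u) (-v) = 0)) :=
  stmt_0_general p₁ p₂ hcop d S c f hf hhom
end

section
/- Let p₁, p₂ be coprime positive integers with p₁ odd, and write p₂ = 2^K · m with m odd (so 2^K is the largest power of 2 dividing p₂). Let f be a radially weighted homogeneous semiholomorphic polynomial with weight vector (p₁,p₂) and radial degree d. Then there exists λ ∈ ℂ with |λ| = 1 such that f(e^{iπ/2^K}·u, −v) = λ · f(u,v) for all u,v ∈ ℂ; in particular the zero set of f is invariant under the transformation τ_{2^K}(u,v) = (e^{iπ/2^K}·u, −v). -/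
/-!
Put `ζ = exp(iπ/2^K)`, so that `ζ^(2^K) = -1`. The transformation multiplies the monomial
`u^μ v^ν₁ v̄^ν₂` by `ζ^μ (-1)^ν` with `ν = ν₁ + ν₂`, and this factor does not depend on the
monomial: choosing `a` with `p₁ a ≡ 1 [MOD 2^(K+1)]` (possible as `p₁` is odd), raising the relation
`ζ^(p₁ μ) (-1)^(m ν) = ζ^(p₁ μ + 2^K m ν) = ζ^d` to the odd power `a` gives `ζ^μ (-1)^ν = ζ^(d a)`.
-/

open ComplexConjugate

theorem Nat.exists_mul_modEq_one_two_pow {p : ℕ} (hp : Odd p) (K : ℕ) :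
    ∃ a, p * a ≡ 1 [MOD 2 ^ (K + 1)] := by
  obtain ⟨a, -, ha⟩ := Nat.exists_mul_mod_eq_one_of_coprime
    (hp.coprime_two_right.pow_right (K + 1)) (Nat.one_lt_two_pow (Nat.succ_ne_zero K))
  exact ⟨a, ha.trans (Nat.one_mod_eq_one.mpr (by simp)).symm⟩

theorem Nat.odd_of_mul_modEq_one_two_pow {p a K : ℕ} (h : p * a ≡ 1 [MOD 2 ^ (K + 1)]) :
    Odd a := by
  have h2 : p * a ≡ 1 [MOD 2] := h.of_dvd (dvd_pow_self 2 (Nat.succ_ne_zero K))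
  exact (Nat.odd_mul.mp (Nat.odd_iff.mpr h2)).2

section RootOfMinusOne

variable {R : Type*} [CommRing R] {ζ : R} {K : ℕ}

theorem pow_two_pow_succ_eq_one (hζ : ζ ^ 2 ^ K = -1) : ζ ^ 2 ^ (K + 1) = 1 := by
  rw [pow_succ, pow_mul, hζ, neg_one_sq]

theorem pow_mul_neg_one_pow_eq_of_weighted_eq (hζ : ζ ^ 2 ^ K = -1) {p₁ m a d : ℕ}
    (hm : Odd m) (ha : p₁ * a ≡ 1 [MOD 2 ^ (K + 1)]) {μ ν : ℕ}
    (hd : p₁ * μ + 2 ^ K * m * ν = d) : ζ ^ μ * (-1) ^ ν = ζ ^ (d * a) := by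
  have hζa : ζ ^ (p₁ * a) = ζ := by
    simpa using pow_eq_pow_of_modEq ha (pow_two_pow_succ_eq_one hζ)
  have hma : (-1 : R) ^ (m * a) = -1 :=
    (hm.mul (Nat.odd_of_mul_modEq_one_two_pow ha)).neg_one_pow
  calc ζ ^ μ * (-1) ^ ν = (ζ ^ (p₁ * a)) ^ μ * ((ζ ^ 2 ^ K) ^ (m * a)) ^ ν := by
        rw [hζa, hζ, hma]
    _ = ζ ^ (d * a) := by rw [← hd]; ring

end RootOfMinusOne

theorem Complex.exp_pi_mul_I_div_two_pow_pow (K : ℕ) :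
    Complex.exp (Real.pi * Complex.I / 2 ^ K) ^ 2 ^ K = -1 := by
  rw [← Complex.exp_nat_mul, Nat.cast_pow, Nat.cast_ofNat,
    mul_div_cancel₀ _ (pow_ne_zero K two_ne_zero), Complex.exp_pi_mul_I]

theorem Complex.norm_exp_pi_mul_I_div_two_pow (K : ℕ) :
    ‖Complex.exp (Real.pi * Complex.I / 2 ^ K)‖ = 1 := by
  rw [show Real.pi * Complex.I / 2 ^ K = ((Real.pi / 2 ^ K : ℝ) : ℂ) * Complex.I by push_cast; ring,
    Complex.norm_exp_ofReal_mul_I]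

theorem apply_mul_mul_eq_mul_of_monomial_factor {S : Finset (ℕ × ℕ × ℕ)} {c : ℕ × ℕ × ℕ → ℂ}
    {f : ℂ → ℂ → ℂ}
    (hf : ∀ u v : ℂ, f u v = ∑ q ∈ S, c q * u ^ q.1 * v ^ q.2.1 * conj v ^ q.2.2)
    {α β l : ℂ} (hβ : conj β = β) (h : ∀ q ∈ S, α ^ q.1 * β ^ (q.2.1 + q.2.2) = l)
    (u v : ℂ) : f (α * u) (β * v) = l * f u v := by
  rw [hf, hf, Finset.mul_sum]
  refine Finset.sum_congr rfl fun q hq => ?_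
  rw [← h q hq, map_mul, hβ]
  ring

theorem stmt_1_general (p₁ p₂ : ℕ)
    (hp₁odd : Odd p₁)
    (K m : ℕ) (hm : Odd m) (hp₂eq : p₂ = 2 ^ K * m)
    (d : ℕ)
    (S : Finset (ℕ × ℕ × ℕ)) (c : ℕ × ℕ × ℕ → ℂ)
    (f : ℂ → ℂ → ℂ)
    (hf : ∀ u v : ℂ, f u v =
      ∑ q ∈ S, c q * u ^ q.1 * v ^ q.2.1 * (starRingEnd ℂ v) ^ q.2.2)
    (hhom : ∀ q ∈ S, p₁ * q.1 + p₂ * (q.2.1 + q.2.2) = d) :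
    ∃ l : ℂ, ‖l‖ = 1 ∧
      (∀ u v : ℂ,
        f (Complex.exp (Real.pi * Complex.I / 2 ^ K) * u) (-v) = l * f u v) ∧
      (∀ u v : ℂ,
        f u v = 0 ↔
          f (Complex.exp (Real.pi * Complex.I / 2 ^ K) * u) (-v) = 0) := by
  set ζ := Complex.exp (Real.pi * Complex.I / 2 ^ K)
  obtain ⟨a, ha⟩ := Nat.exists_mul_modEq_one_two_pow hp₁odd K
  have hfactor : ∀ q ∈ S, ζ ^ q.1 * (-1) ^ (q.2.1 + q.2.2) = ζ ^ (d * a) := fun q hq =>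
    pow_mul_neg_one_pow_eq_of_weighted_eq (Complex.exp_pi_mul_I_div_two_pow_pow K) hm ha
      (by rw [← hhom q hq, hp₂eq])
  have hnorm : ‖ζ ^ (d * a)‖ = 1 := by
    rw [norm_pow, Complex.norm_exp_pi_mul_I_div_two_pow, one_pow]
  have htransform : ∀ u v : ℂ, f (ζ * u) (-v) = ζ ^ (d * a) * f u v := fun u v => by
    simpa using apply_mul_mul_eq_mul_of_monomial_factor hf (by simp) hfactor u v
  refine ⟨ζ ^ (d * a), hnorm, htransform, fun u v => ?_⟩
  rw [htransform, mul_eq_zero_iff_left (norm_ne_zero_iff.mp (by rw [hnorm]; exact one_ne_zero))]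

/-- If `f` is a radially weighted homogeneous semiholomorphic
polynomial with weight vector `(p₁, p₂)`, `p₁` odd, `p₂ = 2^K * m` with `m`
odd, and radial degree `d`, then there is a unit complex number `l` such that
`f(e^{iπ/2^K} u, -v) = l * f(u,v)` for all `u, v`; in particular the zero set
of `f` is invariant under `τ_{2^K}(u,v) = (e^{iπ/2^K} u, -v)`. -/
theorem stmt_1 (p₁ p₂ : ℕ) (hp₁ : 0 < p₁) (hp₂ : 0 < p₂)
    (hcop : Nat.Coprime p₁ p₂) (hp₁odd : Odd p₁)
    (K m : ℕ) (hm : Odd m) (hp₂eq : p₂ = 2 ^ K * m)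
    (d : ℕ)
    (S : Finset (ℕ × ℕ × ℕ)) (c : ℕ × ℕ × ℕ → ℂ)
    (f : ℂ → ℂ → ℂ)
    (hf : ∀ u v : ℂ, f u v =
      ∑ q ∈ S, c q * u ^ q.1 * v ^ q.2.1 * (starRingEnd ℂ v) ^ q.2.2)
    (hhom : ∀ q ∈ S, p₁ * q.1 + p₂ * (q.2.1 + q.2.2) = d) :
    ∃ l : ℂ, ‖l‖ = 1 ∧
      (∀ u v : ℂ,
        f (Complex.exp (Real.pi * Complex.I / 2 ^ K) * u) (-v) = l * f u v) ∧
      (∀ u v : ℂ,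
        f u v = 0 ↔
          f (Complex.exp (Real.pi * Complex.I / 2 ^ K) * u) (-v) = 0) :=
  stmt_1_general p₁ p₂ hp₁odd K m hm hp₂eq d S c f hf hhom
end

section
/- There do not exist a polynomial F ∈ (ZMod 2)[X], an odd natural number λ, and natural numbers m, m′ such that X^m · (X⁶ + X³ + 1) = X^{m′} · F² · (1 + X + X² + ⋯ + X^{λ−1}) holds in (ZMod 2)[X]. -/
/-!
`X⁶ + X³ + 1` is the cyclotomic polynomial `Φ₉`, which over `𝔽₂` is squarefree and prime to `X`.
If `3 ∣ λ`, then `Φ₃ = X² + X + 1` divides `1 + X + ⋯ + X^{λ-1}`, hence divides `X^m Φ₉`; but over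
`𝔽₂` the polynomial `Φ₃` is prime to both `X` and `Φ₉`.
If `3 ∤ λ`, the Euclidean algorithm on exponents shows `1 + X + ⋯ + X^{λ-1}` is prime to
`1 + X + ⋯ + X⁸`, a multiple of `Φ₉`; so `Φ₉ ∣ F²`, hence `Φ₉ ∣ F`, and `Φ₉² ∣ X^m Φ₉` forces
`Φ₉ ∣ X^m`, which is absurd.
-/

open Polynomial Finset

section GeomSum

variable {R : Type*} [CommRing R]

theorem geom_sum_add (x : R) (m n : ℕ) :
    ∑ i ∈ range (m + n), x ^ i = ∑ i ∈ range m, x ^ i + x ^ m * ∑ i ∈ range n, x ^ i := by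
  simp only [sum_range_add, pow_add, mul_sum]

theorem geom_sum_dvd_geom_sum (x : R) {m n : ℕ} (h : m ∣ n) :
    ∑ i ∈ range m, x ^ i ∣ ∑ i ∈ range n, x ^ i := by
  obtain ⟨k, rfl⟩ := h
  induction k with
  | zero => simp
  | succ k ih =>
    rw [mul_add_one, geom_sum_add]
    exact dvd_add ih (dvd_mul_left _ _)

theorem isCoprime_geom_sum_of_coprime (x : R) {m n : ℕ} (h : m.Coprime n) :
    IsCoprime (∑ i ∈ range m, x ^ i) (∑ i ∈ range n, x ^ i) := by
  induction m, n using Nat.gcd.induction with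
  | H0 n =>
    rw [(Nat.coprime_zero_left n).1 h, range_zero, sum_empty, geom_sum_one]
    exact isCoprime_one_right
  | H1 m n hm ih =>
    have hx : IsCoprime (∑ i ∈ range m, x ^ i) x := by
      obtain ⟨k, rfl⟩ := Nat.exists_eq_add_one_of_ne_zero hm.ne'
      rw [geom_sum_succ, add_comm, IsCoprime.add_mul_left_left_iff]
      exact isCoprime_one_left
    obtain ⟨c, hc⟩ := geom_sum_dvd_geom_sum x (dvd_mul_right m (n / m))
    have hsplit : ∑ i ∈ range n, x ^ i =
        x ^ (m * (n / m)) * ∑ i ∈ range (n % m), x ^ i + (∑ i ∈ range m, x ^ i) * c := by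
      rw [add_comm, ← hc, ← geom_sum_add, Nat.div_add_mod]
    have hcop : (n % m).Coprime m := by rwa [Nat.Coprime, ← Nat.gcd_rec]
    rw [hsplit, IsCoprime.add_mul_left_right_iff]
    exact hx.pow_right.mul_right (ih hcop).symm

end GeomSum

namespace Polynomial

theorem isCoprime_X_of_coeff_zero_eq_one {R : Type*} [CommRing R] {p : R[X]} (h : p.coeff 0 = 1) :
    IsCoprime p X := by
  obtain ⟨q, hq⟩ := X_dvd_sub_C (p := p)
  rw [← sub_add_cancel p (C (p.coeff 0)), hq, h, C_1, add_comm, IsCoprime.add_mul_left_left_iff]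
  exact isCoprime_one_left

theorem cyclotomic.isCoprime_X {R : Type*} [CommRing R] {n : ℕ} (hn : 1 < n) :
    IsCoprime (cyclotomic n R) X :=
  isCoprime_X_of_coeff_zero_eq_one (cyclotomic_coeff_zero R hn)

theorem cyclotomic.not_dvd_X_pow_mul {R : Type*} [CommRing R] [IsDomain R] {n : ℕ} (hn : 1 < n)
    {r : R[X]} (hr : IsCoprime (cyclotomic n R) r) (m : ℕ) : ¬ cyclotomic n R ∣ X ^ m * r :=
  fun h => not_isUnit_of_degree_pos _ (degree_cyclotomic_pos n R (by omega))
    (((cyclotomic.isCoprime_X hn).pow_right.mul_right hr).isUnit_of_dvd' dvd_rfl h)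

theorem cyclotomic_nine (R : Type*) [CommRing R] : cyclotomic 9 R = X ^ 6 + X ^ 3 + 1 := by
  rw [show 9 = 3 ^ (1 + 1) from rfl, cyclotomic_prime_pow_eq_geom_sum Nat.prime_three]
  simp only [sum_range_succ, sum_range_zero]
  ring

theorem isCoprime_cyclotomic_nine_geom_sum (R : Type*) [CommRing R] {l : ℕ} (h : ¬ 3 ∣ l) :
    IsCoprime (cyclotomic 9 R) (∑ i ∈ range l, X ^ i) :=
  have h9 : Nat.Coprime 9 l := ((Nat.Prime.coprime_iff_not_dvd Nat.prime_three).2 h).pow_left 2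
  (isCoprime_geom_sum_of_coprime X h9).of_isCoprime_of_dvd_left
    (cyclotomic_dvd_geom_sum_of_dvd R dvd_rfl (by norm_num))

-- `Φ₉ = Φ₃(X³) ≡ Φ₃(1) = 3 = 1 mod Φ₃`
theorem isCoprime_cyclotomic_three_nine_zmod_two :
    IsCoprime (cyclotomic 3 (ZMod 2)) (cyclotomic 9 (ZMod 2)) := by
  refine ⟨X ^ 3 * (X + 1), 1, ?_⟩
  rw [cyclotomic_three, cyclotomic_nine]
  ring_nf
  reduce_mod_char

theorem squarefree_cyclotomic_nine_zmod_two : Squarefree (cyclotomic 9 (ZMod 2)) :=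
  have : NeZero ((9 : ℕ) : ZMod 2) := ⟨by decide⟩
  squarefree_cyclotomic 9 (ZMod 2)

end Polynomial

/-- There is no factorization
`X^m (X⁶ + X³ + 1) = X^{m'} F² (1 + X + ⋯ + X^{λ-1})` with `λ` odd in
`(ZMod 2)[X]`; i.e. the mod-2 Alexander polynomial of `8₁₆` does not satisfy
Murasugi's condition. -/
theorem stmt_10 :
    ¬ ∃ (F : Polynomial (ZMod 2)) (l m m' : ℕ), Odd l ∧
      X ^ m * (X ^ 6 + X ^ 3 + 1) =
        X ^ m' * F ^ 2 * (∑ i ∈ Finset.range l, X ^ i) := by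
  rintro ⟨F, l, m, m', -, hE⟩
  rw [← cyclotomic_nine] at hE
  by_cases h3 : 3 ∣ l
  · refine cyclotomic.not_dvd_X_pow_mul (by norm_num) isCoprime_cyclotomic_three_nine_zmod_two m ?_
    exact hE ▸ (cyclotomic_dvd_geom_sum_of_dvd _ h3 (by norm_num)).mul_left _
  · have hcop : IsCoprime (cyclotomic 9 (ZMod 2)) (X ^ m' * ∑ i ∈ range l, X ^ i) :=
      (cyclotomic.isCoprime_X (by norm_num)).pow_right.mul_right
        (isCoprime_cyclotomic_nine_geom_sum _ h3)
    have hF : cyclotomic 9 (ZMod 2) ∣ F :=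
      squarefree_cyclotomic_nine_zmod_two.dvd_pow_iff_dvd two_ne_zero |>.1 <|
        hcop.dvd_of_dvd_mul_left ⟨X ^ m, by linear_combination -hE⟩
    have hXm : cyclotomic 9 (ZMod 2) ∣ X ^ m * 1 := by
      rw [mul_one, ← mul_dvd_mul_iff_right (cyclotomic_ne_zero 9 (ZMod 2)), hE, ← sq]
      exact (pow_dvd_pow_of_dvd hF 2).mul_left _ |>.mul_right _
    exact cyclotomic.not_dvd_X_pow_mul (by norm_num) isCoprime_one_right m hXm
end
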